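/- Dual error bound for Case II: with (x, y) the exact solution of A*y + i x = f, Ax = y, for any ỹ ∈ D(A*) and any φ ∈ D(A): ‖y − ỹ‖² + ‖A*(y − ỹ)‖² ≤ 2(‖f − i φ − A*ỹ‖² + ‖ỹ − Aφ‖²). -/

import Mathlib

/-!
Put `e = y - ỹ ∈ D(A*)` and `d = x - φ ∈ D(A)`. The two residuals are then
`f - iφ - A*ỹ = A*e + i d` and `ỹ - Aφ = Ad - e`, and `c = ⟪A*e, d⟫ = ⟪e, Ad⟫`.
Expanding, the sum of their squared norms is
`‖A*e‖² + ‖d‖² + ‖Ad‖² + ‖e‖² - 2 (Re c + Im c)`, and the cross term is absorbed by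
`Re c + Im c ≤ √2 |c|` together with Young's inequality `√2 st ≤ s²/2 + t²`
(the weight `δ = 1/√2`), which leaves half of `‖e‖² + ‖A*e‖²`.
-/

open scoped ComplexInnerProductSpace

theorem Complex.re_add_im_le_sqrt_two_mul_norm (c : ℂ) : c.re + c.im ≤ √2 * ‖c‖ := by
  have hsq : (c.re + c.im) ^ 2 ≤ (√2 * ‖c‖) ^ 2 := by
    rw [mul_pow, Real.sq_sqrt zero_le_two, Complex.sq_norm, Complex.normSq_apply]
    nlinarith [sq_nonneg (c.re - c.im)]
  exact (abs_le_of_sq_le_sq' hsq (by positivity)).2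

section InnerProduct

variable {E F : Type*} [NormedAddCommGroup E] [InnerProductSpace ℂ E]
  [NormedAddCommGroup F] [InnerProductSpace ℂ F]

theorem norm_add_I_smul_sq (u w : E) :
    ‖u + Complex.I • w‖ ^ 2 = ‖u‖ ^ 2 + ‖w‖ ^ 2 - 2 * (⟪u, w⟫).im := by
  rw [@norm_add_sq ℂ, inner_smul_right, norm_smul, Complex.norm_I, one_mul]
  simp only [RCLike.re_to_complex, Complex.mul_re, Complex.I_re, Complex.I_im]
  ring

theorem norm_sq_add_norm_sq_le_of_inner_eq (u w : E) (v z : F) (h : ⟪u, w⟫ = ⟪v, z⟫) :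
    ‖v‖ ^ 2 + ‖u‖ ^ 2 ≤ 2 * (‖u + Complex.I • w‖ ^ 2 + ‖z - v‖ ^ 2) := by
  set c : ℂ := ⟪u, w⟫
  have hzv : ‖z - v‖ ^ 2 = ‖z‖ ^ 2 + ‖v‖ ^ 2 - 2 * c.re := by
    rw [@norm_sub_sq ℂ, inner_re_symm, h]
    simp only [RCLike.re_to_complex]
    ring
  have hcross : c.re + c.im ≤ √2 * ‖c‖ := c.re_add_im_le_sqrt_two_mul_norm
  have huw : ‖c‖ ≤ ‖u‖ * ‖w‖ := norm_inner_le_norm u w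
  have hvz : ‖c‖ ≤ ‖v‖ * ‖z‖ := h ▸ norm_inner_le_norm v z
  have hsqrt2 := Real.sq_sqrt (zero_le_two : (0 : ℝ) ≤ 2)
  rw [norm_add_I_smul_sq, hzv]
  nlinarith [Real.sqrt_nonneg 2, sq_nonneg (‖u‖ - √2 * ‖w‖), sq_nonneg (‖v‖ - √2 * ‖z‖)]

end InnerProduct

theorem LinearPMap.norm_sq_add_norm_adjoint_sq_le {E F : Type*}
    [NormedAddCommGroup E] [InnerProductSpace ℂ E] [CompleteSpace E]
    [NormedAddCommGroup F] [InnerProductSpace ℂ F]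
    {A : E →ₗ.[ℂ] F} (hd : Dense (A.domain : Set E)) (e : A.adjoint.domain) (d : A.domain) :
    ‖(e : F)‖ ^ 2 + ‖A.adjoint e‖ ^ 2
      ≤ 2 * (‖A.adjoint e + Complex.I • (d : E)‖ ^ 2 + ‖A d - e‖ ^ 2) :=
  norm_sq_add_norm_sq_le_of_inner_eq _ _ _ _ (adjoint_isFormalAdjoint hd e d)

theorem stmt_14_general
    {H1 H2 : Type*} [NormedAddCommGroup H1] [InnerProductSpace ℂ H1] [CompleteSpace H1]
    [NormedAddCommGroup H2] [InnerProductSpace ℂ H2]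
    (A : H1 →ₗ.[ℂ] H2) (hd : Dense (A.domain : Set H1))
    (f : H1) (x : A.domain) (y : A.adjoint.domain)
    (h1 : A.adjoint y + Complex.I • (x : H1) = f) (h2 : A x = (y : H2))
    (yt : A.adjoint.domain) (φ : A.domain) :
    ‖(y : H2) - (yt : H2)‖ ^ 2 + ‖A.adjoint (y - yt)‖ ^ 2
      ≤ 2 * (‖f - Complex.I • (φ : H1) - A.adjoint yt‖ ^ 2 + ‖(yt : H2) - A φ‖ ^ 2) := by
  have hres1 : f - Complex.I • (φ : H1) - A.adjoint yt
      = A.adjoint (y - yt) + Complex.I • ((x - φ : A.domain) : H1) := by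
    rw [← h1, LinearPMap.map_sub, Submodule.coe_sub, smul_sub]
    abel
  have hres2 : (yt : H2) - A φ = A (x - φ) - ((y - yt : A.adjoint.domain) : H2) := by
    rw [LinearPMap.map_sub, h2, Submodule.coe_sub]
    abel
  rw [hres1, hres2, ← Submodule.coe_sub]
  exact LinearPMap.norm_sq_add_norm_adjoint_sq_le hd (y - yt) (x - φ)

/-- Dual error bound for Case II. -/
theorem stmt_14
    {H1 H2 : Type*} [NormedAddCommGroup H1] [InnerProductSpace ℂ H1] [CompleteSpace H1]
    [NormedAddCommGroup H2] [InnerProductSpace ℂ H2] [CompleteSpace H2]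
    (A : H1 →ₗ.[ℂ] H2) (hd : Dense (A.domain : Set H1)) (hc : A.IsClosed)
    (f : H1) (x : A.domain) (y : A.adjoint.domain)
    (h1 : A.adjoint y + Complex.I • (x : H1) = f) (h2 : A x = (y : H2))
    (yt : A.adjoint.domain) (φ : A.domain) :
    ‖(y : H2) - (yt : H2)‖ ^ 2 + ‖A.adjoint (y - yt)‖ ^ 2
      ≤ 2 * (‖f - Complex.I • (φ : H1) - A.adjoint yt‖ ^ 2 + ‖(yt : H2) - A φ‖ ^ 2) :=
  stmt_14_general A hd f x y h1 h2 yt φ
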